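/- arXiv:2004.05252 — 2 statements merged into one kernel-verified Lean document; each statement's English description precedes it below -/
import Mathlib

section
/- Let A ⊆ B ⊆ {1,…,N} with |A| ≥ γ·N, let γ ∈ (1/2, 1], ℓ ∈ (0, 2·arccos((1−γ)/γ)), and κ > D(Ω_B)/(γ·sin ℓ − 2(1−γ)·sin(ℓ/2)), and let θ be a Kuramoto solution with D(Θ_A(0)) ≤ ℓ. Then the ensemble Θ_A is stable: sup_{t ≥ 0} D(Θ_A(t)) ≤ ℓ, and moreover limsup_{t→∞} D(Θ_A(t)) ≤ φ₁, where φ₁ is the unique solution of γ·sin φ − 2(1−γ)·sin(φ/2) = D(Ω_B)/κ in [0, θ*] with θ* := 2·arccos((1−γ+√((1−γ)²+8γ²))/(4γ)). -/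
/-!
Let `D(t)` be the diameter of the ensemble `A`. At a pair `(i, j)` realising `D`, all of `A` lies
on the arc `[θ_j, θ_i]`, which yields the Dini-derivative inequality `D⁺D ≤ D(Ω_B) - κ f(D)` with
`f x = γ sin x - 2(1 - γ) sin (x / 2)`, as long as `D ≤ 2π`. On `[0, π]` the function `f`
increases up to `θ*` and decreases afterwards, so `f > D(Ω_B)/κ` on `(φ₁, ℓ]`. Hence the level
`ℓ` is a barrier for `D`, and every level `c ∈ (φ₁, ℓ]` is reached in finite time and never
crossed again.
-/

/-- A Kuramoto solution on `[0,∞)` (modeled as a function on ℝ whose ODE holds on `Set.Ici 0`). -/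
def IsKuramotoOn {N : ℕ} (κ : ℝ) (ν : Fin N → ℝ) (θ : ℝ → Fin N → ℝ) : Prop :=
  ∀ (i : Fin N), ∀ t ∈ Set.Ici (0 : ℝ), HasDerivWithinAt (fun s => θ s i)
    (ν i + κ / N * ∑ j, Real.sin (θ t j - θ t i)) (Set.Ici 0) t

/-- Diameter of a sub-ensemble: `max_{i,j ∈ A} |x i - x j|`. -/
noncomputable def diam {N : ℕ} (A : Finset (Fin N)) (x : Fin N → ℝ) : ℝ :=
  sSup {d : ℝ | ∃ i ∈ A, ∃ j ∈ A, d = |x i - x j|}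

open Real Set Filter Topology

lemma sin_eq_two_mul_sin_half_mul_cos_half (x : ℝ) : sin x = 2 * sin (x / 2) * cos (x / 2) := by
  rw [← sin_two_mul]; ring_nf

section Diameter

variable {N : ℕ} {A : Finset (Fin N)} {x : Fin N → ℝ}

lemma diam_eq_sup' (hA : A.Nonempty) (x : Fin N → ℝ) :
    diam A x = (A ×ˢ A).sup' (hA.product hA) fun p => x p.1 - x p.2 := by
  obtain ⟨⟨i, j⟩, hij, hmax⟩ :=
    Finset.exists_mem_eq_sup' (hA.product hA) fun p => x p.1 - x p.2
  have hle : ∀ k ∈ A, ∀ l ∈ A,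
      x k - x l ≤ (A ×ˢ A).sup' (hA.product hA) fun p => x p.1 - x p.2 :=
    fun k hk l hl => Finset.le_sup' (fun p => x p.1 - x p.2)
      (show (k, l) ∈ A ×ˢ A from Finset.mem_product.2 ⟨hk, hl⟩)
  obtain ⟨hi, hj⟩ := Finset.mem_product.1 hij
  refine IsGreatest.csSup_eq ⟨⟨i, hi, j, hj, ?_⟩, ?_⟩
  · have := hle j hj i hi
    rw [hmax] at this ⊢
    rw [abs_of_nonneg (by linarith)]
  · rintro _ ⟨k, hk, l, hl, rfl⟩
    exact abs_sub_le_iff.2 ⟨hle k hk l hl, hle l hl k hk⟩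

lemma sub_le_diam {i j : Fin N} (hi : i ∈ A) (hj : j ∈ A) : x i - x j ≤ diam A x := by
  rw [diam_eq_sup' ⟨i, hi⟩]
  exact Finset.le_sup' (fun p => x p.1 - x p.2)
    (show (i, j) ∈ A ×ˢ A from Finset.mem_product.2 ⟨hi, hj⟩)

lemma diam_nonneg (hA : A.Nonempty) (x : Fin N → ℝ) : 0 ≤ diam A x := by
  obtain ⟨i, hi⟩ := hA
  simpa using sub_le_diam (x := x) hi hi

lemma continuousOn_diam {θ : ℝ → Fin N → ℝ} {S : Set ℝ} (hA : A.Nonempty)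
    (hθ : ∀ i, ContinuousOn (fun s => θ s i) S) : ContinuousOn (fun s => diam A (θ s)) S := by
  simp_rw [diam_eq_sup' hA]
  exact ContinuousOn.finset_sup'_apply _ fun p _ => (hθ p.1).sub (hθ p.2)

end Diameter

section Dini

def DiniUpperRightLE (u : ℝ → ℝ) (t v : ℝ) : Prop :=
  ∀ r, v < r → ∀ᶠ z in 𝓝[>] t, slope u t z < r

lemma HasDerivWithinAt.diniUpperRightLE {u : ℝ → ℝ} {u' t v : ℝ}
    (h : HasDerivWithinAt u u' (Ici t) t) (hv : u' ≤ v) : DiniUpperRightLE u t v :=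
  fun _ hr => ((hasDerivWithinAt_iff_tendsto_slope' (lt_irrefl t)).1
    h.Ioi_of_Ici).eventually_lt_const (hv.trans_lt hr)

lemma diniUpperRightLE_finset_sup' {ι : Type*} {s : Finset ι} (hs : s.Nonempty)
    {g : ι → ℝ → ℝ} {t v : ℝ} (hcont : ∀ i ∈ s, ContinuousWithinAt (g i) (Ioi t) t)
    (hactive : ∀ i ∈ s, g i t = s.sup' hs (fun i => g i t) → DiniUpperRightLE (g i) t v) :
    DiniUpperRightLE (fun z => s.sup' hs fun i => g i z) t v := by
  intro r hr
  set M := s.sup' hs fun i => g i t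
  have hbelow : ∀ i ∈ s, ∀ᶠ z in 𝓝[>] t, g i z < M + r * (z - t) := by
    intro i hi
    rcases (s.le_sup' (fun i => g i t) hi).lt_or_eq with hlt | heq
    · have hlim : Tendsto (fun z => g i z - r * (z - t)) (𝓝[>] t) (𝓝 (g i t - r * (t - t))) :=
        ((hcont i hi).sub (Continuous.continuousWithinAt (by fun_prop))).tendsto
      filter_upwards [hlim.eventually_lt_const (by simpa using hlt)] with z hz
      linarith
    · filter_upwards [hactive i hi heq r hr, self_mem_nhdsWithin] with z hz hzt
      rw [slope_def_field, div_lt_iff₀ (sub_pos.2 hzt)] at hz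
      linarith
  filter_upwards [(s.eventually_all).2 hbelow, self_mem_nhdsWithin] with z hz hzt
  rw [slope_def_field, div_lt_iff₀ (sub_pos.2 hzt)]
  linarith [(Finset.sup'_lt_iff hs).2 hz]

variable {u : ℝ → ℝ} {a : ℝ}

lemma le_of_diniUpperRightLE_lt_deriv {B B' : ℝ → ℝ} (hcont : ContinuousOn u (Ici a))
    (hfin : ∀ t ≥ a, ∃ v, DiniUpperRightLE u t v) (hB : ∀ t, HasDerivAt B (B' t) t)
    (ha : u a ≤ B a) (hcontact : ∀ t ≥ a, u t = B t → ∃ w < B' t, DiniUpperRightLE u t w) :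
    ∀ t ≥ a, u t ≤ B t := by
  have hbound : ∀ t ≥ a, ∃ v, DiniUpperRightLE u t v ∧ (u t = B t → v < B' t) := by
    intro t ht
    by_cases h : u t = B t
    · obtain ⟨w, hw, hd⟩ := hcontact t ht h
      exact ⟨w, hd, fun _ => hw⟩
    · obtain ⟨v, hv⟩ := hfin t ht
      exact ⟨v, hv, fun h' => absurd h' h⟩
  choose! u' hu' hcontact' using hbound
  intro t ht
  exact image_le_of_liminf_slope_right_lt_deriv_boundary (hcont.mono Icc_subset_Ici_self)
    (fun s hs r hr => (hu' s hs.1 r hr).frequently) ha hB (fun s hs => hcontact' s hs.1)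
    ⟨ht, le_rfl⟩

lemma le_of_diniUpperRightLE_neg {c : ℝ} (hcont : ContinuousOn u (Ici a))
    (hfin : ∀ t ≥ a, ∃ v, DiniUpperRightLE u t v) (ha : u a ≤ c)
    (hcontact : ∀ t ≥ a, u t = c → ∃ w < 0, DiniUpperRightLE u t w) :
    ∀ t ≥ a, u t ≤ c :=
  le_of_diniUpperRightLE_lt_deriv (B := fun _ => c) hcont hfin (fun t => hasDerivAt_const t c)
    ha hcontact

/-- By compactness `g ≤ -δ` on `[c, ℓ]`, so `u` reaches `c` before the line of slope `-δ/2`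
started at `ℓ` does; the level `c` is a barrier from then on. -/
lemma eventually_le_of_diniUpperRightLE {g : ℝ → ℝ} {c ℓ : ℝ} (hcont : ContinuousOn u (Ici a))
    (hfin : ∀ t ≥ a, ∃ v, DiniUpperRightLE u t v) (hcℓ : c ≤ ℓ) (hg : ContinuousOn g (Icc c ℓ))
    (hneg : ∀ x ∈ Icc c ℓ, g x < 0) (ha : u a ≤ ℓ)
    (hdini : ∀ t ≥ a, u t ∈ Icc c ℓ → DiniUpperRightLE u t (g (u t))) :
    ∀ᶠ t in atTop, u t ≤ c := by
  obtain ⟨δ, hδ, hgδ⟩ : ∃ δ > 0, ∀ x ∈ Icc c ℓ, g x ≤ -δ := by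
    obtain ⟨x₀, hx₀, hmax⟩ := isCompact_Icc.exists_isMaxOn (nonempty_Icc.2 hcℓ) hg
    exact ⟨-g x₀, neg_pos.2 (hneg x₀ hx₀), fun x hx => by simpa using isMaxOn_iff.1 hmax x hx⟩
  have hreach : ∃ t₀ ≥ a, u t₀ ≤ c := by
    by_contra! habove
    have hline := le_of_diniUpperRightLE_lt_deriv (B := fun s => ℓ - δ / 2 * (s - a))
      (B' := fun _ => -(δ / 2)) hcont hfin
      (fun t => by simpa using (((hasDerivAt_id t).sub_const a).const_mul (δ / 2)).const_sub ℓ)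
      (by simpa using ha) fun t ht hcontact => by
        have hmem : u t ∈ Icc c ℓ :=
          ⟨(habove t ht).le, hcontact.trans_le (by nlinarith [sub_nonneg.2 ht])⟩
        exact ⟨g (u t), by linarith [hgδ _ hmem], hdini t ht hmem⟩
    have hT : a ≤ a + 2 * (ℓ - c) / δ := le_add_of_nonneg_right (by positivity)
    have hBT : δ / 2 * (a + 2 * (ℓ - c) / δ - a) = ℓ - c := by field_simp; ring
    linarith [hline _ hT, habove _ hT]
  obtain ⟨t₀, ht₀, hu₀⟩ := hreach
  refine eventually_atTop.2 ⟨t₀, le_of_diniUpperRightLE_neg (hcont.mono (Ici_subset_Ici.2 ht₀))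
    (fun t ht => hfin t (ht₀.trans ht)) hu₀ fun t ht hc => ?_⟩
  have hmem : u t ∈ Icc c ℓ := by rw [hc]; exact ⟨le_rfl, hcℓ⟩
  exact ⟨g (u t), hneg _ hmem, hdini t (ht₀.trans ht) hmem⟩

end Dini

section ContractionRate

noncomputable def contractionRate (γ x : ℝ) : ℝ := γ * sin x - 2 * (1 - γ) * sin (x / 2)

/-- The positive root of `2γu² - (1 - γ)u - γ`, which is `(contractionRate γ)'(x)` written in
`u = cos (x / 2)`. -/
noncomputable def criticalCos (γ : ℝ) : ℝ := (1 - γ + √((1 - γ) ^ 2 + 8 * γ ^ 2)) / (4 * γ)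

variable {γ : ℝ}

lemma continuous_contractionRate (γ : ℝ) : Continuous (contractionRate γ) := by
  unfold contractionRate; fun_prop

lemma hasDerivAt_contractionRate (γ x : ℝ) :
    HasDerivAt (contractionRate γ) (γ * cos x - (1 - γ) * cos (x / 2)) x := by
  have hhalf := ((hasDerivAt_id' x).div_const 2).sin
  exact (((hasDerivAt_sin x).const_mul γ).sub (hhalf.const_mul (2 * (1 - γ)))).congr_deriv
    (by ring)

lemma mul_deriv_contractionRate_eq (γ x : ℝ) :
    8 * γ * (γ * cos x - (1 - γ) * cos (x / 2)) =
      (4 * γ * cos (x / 2) - (1 - γ)) ^ 2 - ((1 - γ) ^ 2 + 8 * γ ^ 2) := by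
  rw [show cos x = 2 * cos (x / 2) ^ 2 - 1 by rw [← cos_two_mul]; ring_nf]
  ring

lemma abs_one_sub_le_sqrt_discr (γ : ℝ) : |1 - γ| ≤ √((1 - γ) ^ 2 + 8 * γ ^ 2) :=
  abs_le_sqrt (by nlinarith)

lemma criticalCos_nonneg (hγ : 0 < γ) : 0 ≤ criticalCos γ :=
  div_nonneg (by linarith [neg_abs_le (1 - γ), abs_one_sub_le_sqrt_discr γ]) (by positivity)

lemma criticalCos_le_one (hγ : 1 / 2 ≤ γ) : criticalCos γ ≤ 1 := by
  rw [criticalCos, div_le_one (by positivity)]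
  linarith [sqrt_le_iff.2 (⟨by linarith, by nlinarith⟩ :
    0 ≤ 5 * γ - 1 ∧ (1 - γ) ^ 2 + 8 * γ ^ 2 ≤ (5 * γ - 1) ^ 2)]

lemma deriv_contractionRate_pos {x : ℝ} (hγ : 0 < γ) (hx : criticalCos γ < cos (x / 2)) :
    0 < γ * cos x - (1 - γ) * cos (x / 2) := by
  rw [criticalCos, div_lt_iff₀ (by positivity)] at hx
  have hs := sqrt_nonneg ((1 - γ) ^ 2 + 8 * γ ^ 2)
  have hsq := sq_sqrt (by positivity : (0 : ℝ) ≤ (1 - γ) ^ 2 + 8 * γ ^ 2)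
  have h := mul_deriv_contractionRate_eq γ x
  nlinarith

lemma deriv_contractionRate_nonpos {x : ℝ} (hγ : 0 < γ) (h0 : 0 ≤ cos (x / 2))
    (hx : cos (x / 2) ≤ criticalCos γ) : γ * cos x - (1 - γ) * cos (x / 2) ≤ 0 := by
  rw [criticalCos, le_div_iff₀ (by positivity)] at hx
  have hs := abs_one_sub_le_sqrt_discr γ
  have hsq := sq_sqrt (by positivity : (0 : ℝ) ≤ (1 - γ) ^ 2 + 8 * γ ^ 2)
  have h := mul_deriv_contractionRate_eq γ x
  nlinarith [le_abs_self (1 - γ), mul_nonneg hγ.le h0]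

lemma contractionRate_strictMonoOn (hγ : 1 / 2 ≤ γ) :
    StrictMonoOn (contractionRate γ) (Icc 0 (2 * arccos (criticalCos γ))) := by
  refine strictMonoOn_of_deriv_pos (convex_Icc _ _) (continuous_contractionRate γ).continuousOn
    fun x hx => ?_
  rw [interior_Icc] at hx
  rw [(hasDerivAt_contractionRate γ x).deriv]
  refine deriv_contractionRate_pos (by linarith) ?_
  calc criticalCos γ = cos (arccos (criticalCos γ)) :=
        (cos_arccos (by linarith [criticalCos_nonneg (by linarith : 0 < γ)])
          (criticalCos_le_one hγ)).symm
    _ < cos (x / 2) :=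
        cos_lt_cos_of_nonneg_of_le_pi (by linarith [hx.1]) (arccos_le_pi _) (by linarith [hx.2])

lemma contractionRate_antitoneOn (hγ : 1 / 2 ≤ γ) :
    AntitoneOn (contractionRate γ) (Icc (2 * arccos (criticalCos γ)) π) := by
  refine antitoneOn_of_deriv_nonpos (convex_Icc _ _) (continuous_contractionRate γ).continuousOn
    (fun x _ => (hasDerivAt_contractionRate γ x).differentiableAt.differentiableWithinAt)
    fun x hx => ?_
  rw [interior_Icc] at hx
  rw [(hasDerivAt_contractionRate γ x).deriv]
  have harccos := arccos_nonneg (criticalCos γ)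
  refine deriv_contractionRate_nonpos (by linarith)
    (cos_nonneg_of_mem_Icc ⟨by linarith [hx.1, pi_pos], by linarith [hx.2]⟩) ?_
  calc cos (x / 2) ≤ cos (arccos (criticalCos γ)) :=
        cos_le_cos_of_nonneg_of_le_pi harccos (by linarith [hx.2, pi_pos]) (by linarith [hx.1])
    _ = criticalCos γ :=
        cos_arccos (by linarith [criticalCos_nonneg (by linarith : 0 < γ)]) (criticalCos_le_one hγ)

lemma contractionRate_pos {ℓ : ℝ} (hγ : 1 / 2 ≤ γ)
    (hℓ : ℓ ∈ Ioo 0 (2 * arccos ((1 - γ) / γ))) : 0 < contractionRate γ ℓ := by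
  have hγ0 : 0 < γ := by linarith
  have hsin : 0 < sin (ℓ / 2) :=
    sin_pos_of_pos_of_lt_pi (by linarith [hℓ.1]) (by linarith [hℓ.2, arccos_le_pi ((1 - γ) / γ)])
  have hcos : (1 - γ) / γ < cos (ℓ / 2) :=
    calc (1 - γ) / γ = cos (arccos ((1 - γ) / γ)) :=
          (cos_arccos (by rw [le_div_iff₀ hγ0]; linarith) (by rw [div_le_one hγ0]; linarith)).symm
      _ < cos (ℓ / 2) :=
          cos_lt_cos_of_nonneg_of_le_pi (by linarith [hℓ.1]) (arccos_le_pi _) (by linarith [hℓ.2])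
  rw [div_lt_iff₀ hγ0] at hcos
  have hfactor : contractionRate γ ℓ = 2 * sin (ℓ / 2) * (γ * cos (ℓ / 2) - (1 - γ)) := by
    rw [contractionRate, sin_eq_two_mul_sin_half_mul_cos_half ℓ]; ring
  rw [hfactor]
  exact mul_pos (by linarith) (by linarith)

lemma contractionRate_lt_of_mem_Ioc {φ ℓ x : ℝ} (hγ : 1 / 2 ≤ γ)
    (hφ : φ ∈ Icc 0 (2 * arccos (criticalCos γ))) (hℓ : ℓ ≤ π)
    (hφℓ : contractionRate γ φ < contractionRate γ ℓ) (hx : x ∈ Ioc φ ℓ) :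
    contractionRate γ φ < contractionRate γ x := by
  rcases le_or_gt x (2 * arccos (criticalCos γ)) with hxc | hcx
  · exact contractionRate_strictMonoOn hγ hφ ⟨hφ.1.trans hx.1.le, hxc⟩ hx.1
  · exact hφℓ.trans_le
      (contractionRate_antitoneOn hγ ⟨hcx.le, hx.2.trans hℓ⟩ ⟨hcx.le.trans hx.2, hℓ⟩ hx.2)

end ContractionRate

section Kuramoto

lemma sin_sub_sub_sin_sub (a b y : ℝ) :
    sin (y - b) - sin (y - a) = -(2 * sin ((b - a) / 2) * cos (y - (a + b) / 2)) := by
  rw [sin_sub_sin, show (y - b - (y - a)) / 2 = -((b - a) / 2) by ring,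
    show (y - b + (y - a)) / 2 = y - (a + b) / 2 by ring, sin_neg]
  ring

lemma sin_sub_sub_sin_sub_le {a b : ℝ} (hab : a ≤ b) (hba : b - a ≤ 2 * π) (y : ℝ) :
    sin (y - b) - sin (y - a) ≤ 2 * sin ((b - a) / 2) := by
  have hsin : 0 ≤ sin ((b - a) / 2) := sin_nonneg_of_nonneg_of_le_pi (by linarith) (by linarith)
  rw [sin_sub_sub_sin_sub]
  nlinarith [neg_one_le_cos (y - (a + b) / 2)]

lemma sin_sub_sub_sin_sub_le_neg_sin {a b y : ℝ} (hay : a ≤ y) (hyb : y ≤ b)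
    (hba : b - a ≤ 2 * π) : sin (y - b) - sin (y - a) ≤ -sin (b - a) := by
  have hsin : 0 ≤ sin ((b - a) / 2) := sin_nonneg_of_nonneg_of_le_pi (by linarith) (by linarith)
  have hcos : cos ((b - a) / 2) ≤ cos (y - (a + b) / 2) := by
    rw [← cos_abs (y - (a + b) / 2)]
    exact cos_le_cos_of_nonneg_of_le_pi (abs_nonneg _) (by linarith)
      (abs_le.2 ⟨by linarith, by linarith⟩)
  rw [sin_sub_sub_sin_sub, sin_eq_two_mul_sin_half_mul_cos_half (b - a)]
  nlinarith [mul_le_mul_of_nonneg_left hcos hsin]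

/-- The oscillators of `A` lie on the arc `[x j, x i]` and each pulls `i` and `j` together by at
least `sin d`; any other oscillator pushes them apart by at most `2 sin (d / 2)`. -/
lemma sum_sin_sub_sub_sin_sub_le {ι : Type*} [Fintype ι] {γ : ℝ} (x : ι → ℝ) (A : Finset ι)
    {i j : ι} (hji : x j ≤ x i) (hd : x i - x j ≤ 2 * π)
    (hA : ∀ k ∈ A, x j ≤ x k ∧ x k ≤ x i) (hcard : γ * Fintype.card ι ≤ A.card) :
    ∑ k, (sin (x k - x i) - sin (x k - x j)) ≤
      -(Fintype.card ι * contractionRate γ (x i - x j)) := by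
  classical
  set d := x i - x j
  have hsin : 0 ≤ sin (d / 2) := sin_nonneg_of_nonneg_of_le_pi (by linarith) (by linarith)
  have hpush : 0 ≤ sin d + 2 * sin (d / 2) := by
    rw [sin_eq_two_mul_sin_half_mul_cos_half d]
    nlinarith [neg_one_le_cos (d / 2)]
  calc ∑ k, (sin (x k - x i) - sin (x k - x j))
      = ∑ k ∈ A, (sin (x k - x i) - sin (x k - x j)) +
          ∑ k ∈ Aᶜ, (sin (x k - x i) - sin (x k - x j)) := (A.sum_add_sum_compl _).symm
    _ ≤ ∑ _k ∈ A, -sin d + ∑ _k ∈ Aᶜ, 2 * sin (d / 2) :=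
        add_le_add
          (Finset.sum_le_sum fun k hk => sin_sub_sub_sin_sub_le_neg_sin (hA k hk).1 (hA k hk).2 hd)
          (Finset.sum_le_sum fun k _ => sin_sub_sub_sin_sub_le hji hd _)
    _ = A.card * -sin d + (Fintype.card ι - A.card) * (2 * sin (d / 2)) := by
        simp [Finset.card_compl, Nat.cast_sub A.card_le_univ]
    _ ≤ -(Fintype.card ι * contractionRate γ d) := by
        rw [contractionRate]
        nlinarith [mul_nonneg (sub_nonneg.2 hcard) hpush]

noncomputable def kuramotoField {N : ℕ} (κ : ℝ) (ν x : Fin N → ℝ) (i : Fin N) : ℝ :=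
  ν i + κ / N * ∑ j, sin (x j - x i)

variable {N : ℕ} {κ γ : ℝ} {ν : Fin N → ℝ} {A B : Finset (Fin N)}

lemma kuramotoField_sub_le (hκ : 0 ≤ κ) (hAB : A ⊆ B) (hcard : γ * N ≤ A.card)
    (x : Fin N → ℝ) {i j : Fin N} (hi : i ∈ A) (hj : j ∈ A) (hij : x i - x j = diam A x)
    (hd : diam A x ≤ 2 * π) :
    kuramotoField κ ν x i - kuramotoField κ ν x j ≤
      diam B ν - κ * contractionRate γ (diam A x) := by
  have hN : (0 : ℝ) < N := Nat.cast_pos.2 i.pos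
  have hA : ∀ k ∈ A, x j ≤ x k ∧ x k ≤ x i := fun k hk =>
    ⟨by linarith [sub_le_diam (x := x) hi hk], by linarith [sub_le_diam (x := x) hk hj]⟩
  have hsum := sum_sin_sub_sub_sin_sub_le x A (hA i hi).1 (hij ▸ hd) hA
    (by simpa using hcard)
  rw [hij, Fintype.card_fin] at hsum
  calc kuramotoField κ ν x i - kuramotoField κ ν x j
      = (ν i - ν j) + κ / N * ∑ k, (sin (x k - x i) - sin (x k - x j)) := by
        rw [Finset.sum_sub_distrib, kuramotoField, kuramotoField]; ring
    _ ≤ diam B ν + κ / N * -(N * contractionRate γ (diam A x)) :=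
        add_le_add (sub_le_diam (hAB hi) (hAB hj)) (mul_le_mul_of_nonneg_left hsum (by positivity))
    _ = diam B ν - κ * contractionRate γ (diam A x) := by field_simp; ring

variable {θ : ℝ → Fin N → ℝ}

lemma IsKuramotoOn.continuousOn (hθ : IsKuramotoOn κ ν θ) (i : Fin N) :
    ContinuousOn (fun s => θ s i) (Ici 0) :=
  fun t ht => (hθ i t ht).continuousWithinAt

lemma IsKuramotoOn.diniUpperRightLE_diam_of_le (hθ : IsKuramotoOn κ ν θ) (hA : A.Nonempty)
    {t v : ℝ} (ht : 0 ≤ t)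
    (hv : ∀ i ∈ A, ∀ j ∈ A, θ t i - θ t j = diam A (θ t) →
      kuramotoField κ ν (θ t) i - kuramotoField κ ν (θ t) j ≤ v) :
    DiniUpperRightLE (fun s => diam A (θ s)) t v := by
  have hsup : (fun s => diam A (θ s)) =
      fun s => (A ×ˢ A).sup' (hA.product hA) fun p => θ s p.1 - θ s p.2 :=
    funext fun s => diam_eq_sup' hA (θ s)
  rw [hsup]
  refine diniUpperRightLE_finset_sup' (s := A ×ˢ A) (hA.product hA)
    (g := fun p s => θ s p.1 - θ s p.2) (t := t) (v := v) ?_ ?_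
  · intro p _
    exact ((hθ.continuousOn p.1).sub (hθ.continuousOn p.2) t ht).mono (Ioi_subset_Ici_iff.2 ht)
  intro p hp hmax
  obtain ⟨hi, hj⟩ := Finset.mem_product.1 hp
  exact (((hθ p.1 t ht).sub (hθ p.2 t ht)).mono (Ici_subset_Ici.2 ht)).diniUpperRightLE
    (hv _ hi _ hj (hmax.trans (diam_eq_sup' hA (θ t)).symm))

lemma IsKuramotoOn.exists_diniUpperRightLE_diam (hθ : IsKuramotoOn κ ν θ) (hA : A.Nonempty)
    {t : ℝ} (ht : 0 ≤ t) : ∃ v, DiniUpperRightLE (fun s => diam A (θ s)) t v :=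
  ⟨(A ×ˢ A).sup' (hA.product hA) fun p => kuramotoField κ ν (θ t) p.1 - kuramotoField κ ν (θ t) p.2,
    hθ.diniUpperRightLE_diam_of_le hA ht fun i hi j hj _ =>
      Finset.le_sup' (fun p => kuramotoField κ ν (θ t) p.1 - kuramotoField κ ν (θ t) p.2)
        (show (i, j) ∈ A ×ˢ A from Finset.mem_product.2 ⟨hi, hj⟩)⟩

lemma IsKuramotoOn.diniUpperRightLE_diam (hθ : IsKuramotoOn κ ν θ) (hκ : 0 ≤ κ) (hAB : A ⊆ B)
    (hcard : γ * N ≤ A.card) (hA : A.Nonempty) {t : ℝ} (ht : 0 ≤ t)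
    (hd : diam A (θ t) ≤ 2 * π) :
    DiniUpperRightLE (fun s => diam A (θ s)) t (diam B ν - κ * contractionRate γ (diam A (θ t))) :=
  hθ.diniUpperRightLE_diam_of_le hA ht fun _ hi _ hj hij =>
    kuramotoField_sub_le hκ hAB hcard (θ t) hi hj hij hd

end Kuramoto

/-- Stability of a majority ensemble (Theorem 3.1 (1)): if `A ⊆ B`, `|A| ≥ γN`,
`γ ∈ (1/2,1]`, `ℓ ∈ (0, 2 arccos((1−γ)/γ))`, `κ > D(Ω_B)/(γ sin ℓ − 2(1−γ) sin(ℓ/2))`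
and `D(Θ_A(0)) ≤ ℓ`, then `D(Θ_A(t)) ≤ ℓ` for all `t ≥ 0` and
`limsup_{t→∞} D(Θ_A(t)) ≤ φ₁`, where `φ₁` is the solution of
`γ sin φ − 2(1−γ) sin(φ/2) = D(Ω_B)/κ` in `[0, θ*]`. -/
theorem majority_ensemble_stable (N : ℕ) (hN : 1 ≤ N) (κ γ ℓ : ℝ)
    (hγ₁ : 1 / 2 < γ) (hγ₂ : γ ≤ 1)
    (hℓ : ℓ ∈ Set.Ioo 0 (2 * Real.arccos ((1 - γ) / γ)))
    (ν : Fin N → ℝ) (A B : Finset (Fin N)) (hAB : A ⊆ B)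
    (hcard : γ * N ≤ (A.card : ℝ))
    (hκ : diam B ν / (γ * Real.sin ℓ - 2 * (1 - γ) * Real.sin (ℓ / 2)) < κ)
    (θ : ℝ → Fin N → ℝ) (hθ : IsKuramotoOn κ ν θ)
    (h0 : diam A (θ 0) ≤ ℓ)
    (θs φ₁ : ℝ)
    (hθs : θs = 2 * Real.arccos ((1 - γ + Real.sqrt ((1 - γ) ^ 2 + 8 * γ ^ 2)) / (4 * γ)))
    (hφ₁mem : φ₁ ∈ Set.Icc 0 θs)
    (hφ₁root : γ * Real.sin φ₁ - 2 * (1 - γ) * Real.sin (φ₁ / 2) = diam B ν / κ) :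
    (∀ t ≥ (0 : ℝ), diam A (θ t) ≤ ℓ) ∧
    Filter.limsup (fun t => diam A (θ t)) Filter.atTop ≤ φ₁ := by
  have hγ : 0 < γ := by linarith
  have hA : A.Nonempty := Finset.card_pos.1 <| Nat.cast_pos.1 <|
    (mul_pos hγ (Nat.cast_pos.2 hN)).trans_le hcard
  have hℓπ : ℓ < π := by
    linarith [hℓ.2, arccos_le_pi_div_two.2 (div_nonneg (sub_nonneg.2 hγ₂) hγ.le)]
  have hrateℓ : 0 < contractionRate γ ℓ := contractionRate_pos hγ₁.le hℓ
  have hΩℓ : diam B ν < κ * contractionRate γ ℓ := (div_lt_iff₀ hrateℓ).1 hκ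
  have hκ0 : 0 < κ := pos_of_mul_pos_left ((diam_nonneg (hA.mono hAB) ν).trans_lt hΩℓ) hrateℓ.le
  have hcont := continuousOn_diam hA hθ.continuousOn
  have hfin : ∀ t ≥ 0, ∃ v, DiniUpperRightLE (fun s => diam A (θ s)) t v :=
    fun t ht => hθ.exists_diniUpperRightLE_diam hA ht
  have hdini : ∀ t ≥ 0, diam A (θ t) ≤ ℓ → DiniUpperRightLE (fun s => diam A (θ s)) t
      (diam B ν - κ * contractionRate γ (diam A (θ t))) := fun t ht hd =>
    hθ.diniUpperRightLE_diam hκ0.le hAB hcard hA ht (by linarith [pi_pos])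
  have hstable : ∀ t ≥ 0, diam A (θ t) ≤ ℓ := le_of_diniUpperRightLE_neg hcont hfin h0
    fun t ht hd => ⟨_, by rw [hd]; linarith, hdini t ht hd.le⟩
  refine ⟨hstable, le_of_forall_gt_imp_ge_of_dense fun c hc => limsup_le_of_le
    (isCoboundedUnder_le_of_le atTop fun t => diam_nonneg hA (θ t)) ?_⟩
  rcases le_or_gt c ℓ with hcℓ | hℓc
  · have hroot : contractionRate γ φ₁ = diam B ν / κ := hφ₁root
    have hφ₁ℓ : contractionRate γ φ₁ < contractionRate γ ℓ := by
      rwa [hroot, div_lt_iff₀' hκ0]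
    refine eventually_le_of_diniUpperRightLE (g := fun x => diam B ν - κ * contractionRate γ x)
      hcont hfin hcℓ
      (continuous_const.sub (continuous_const.mul (continuous_contractionRate γ))).continuousOn
      (fun x hx => ?_) h0 fun t ht hd => hdini t ht hd.2
    have := contractionRate_lt_of_mem_Ioc hγ₁.le (hθs ▸ hφ₁mem) hℓπ.le hφ₁ℓ
      ⟨hc.trans_le hx.1, hx.2⟩
    rw [hroot, div_lt_iff₀' hκ0] at this
    exact sub_neg.2 this
  · exact eventually_atTop.2 ⟨0, fun t ht => (hstable t ht).trans hℓc.le⟩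
end

section
/- Let N = 3 and suppose the coupling strength satisfies κ > (√(138+22√33)/4)·D(Ω) (≈ 4.0649·D(Ω)). Then for every initial phase vector Θ⁰ ∈ ℝ³, the Kuramoto solution θ with θ(0) = Θ⁰ exhibits complete phase-locking: for every pair of indices i, j, the limit lim_{t→∞}(θ_i(t) − θ_j(t)) exists and is finite. -/
/-- Diameter of natural frequencies `D(Ω) = max_{i,j} |νᵢ − νⱼ|`. -/
noncomputable def freqDiam {N : ℕ} (ν : Fin N → ℝ) : ℝ :=
  sSup {d : ℝ | ∃ i : Fin N, ∃ j : Fin N, d = |ν i - ν j|}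

open Real Set Filter Topology Metric

theorem mem_Icc_of_hasDerivWithinAt {x x' : ℝ → ℝ} {a b : ℝ}
    (hx : ∀ t ∈ Ici 0, HasDerivWithinAt x (x' t) (Ici 0) t) (h0 : x 0 ∈ Icc a b)
    (ha : ∀ t ≥ 0, x t = a → 0 < x' t) (hb : ∀ t ≥ 0, x t = b → x' t < 0)
    {t : ℝ} (ht : 0 ≤ t) : x t ∈ Icc a b := by
  have hcont : ContinuousOn x (Icc 0 t) := fun s hs =>
    (hx s hs.1).continuousWithinAt.mono Icc_subset_Ici_self
  have hderiv : ∀ s ∈ Ico 0 t, HasDerivWithinAt x (x' s) (Ici s) s := fun s hs =>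
    (hx s hs.1).mono (Ici_subset_Ici.2 hs.1)
  refine ⟨image_le_of_deriv_right_lt_deriv_boundary' (f' := 0) continuousOn_const
    (fun _ _ => hasDerivWithinAt_const _ _ _) h0.1 hcont hderiv
    (fun s hs h => ha s hs.1 h.symm) ⟨ht, le_rfl⟩, ?_⟩
  exact image_le_of_deriv_right_lt_deriv_boundary hcont hderiv h0.2
    (fun _ => hasDerivAt_const _ _) (fun s hs h => hb s hs.1 h) ⟨ht, le_rfl⟩

theorem exists_forall_abs_le_of_hasDerivWithinAt {x x' : ℝ → ℝ}
    (hx : ∀ t ∈ Ici 0, HasDerivWithinAt x (x' t) (Ici 0) t) {U : Set ℝ} (hU : ¬BddAbove U)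
    (hpos : ∀ t ≥ 0, -x t ∈ U → 0 < x' t) (hneg : ∀ t ≥ 0, x t ∈ U → x' t < 0) :
    ∃ R, ∀ t ≥ 0, |x t| ≤ R := by
  obtain ⟨u, hu, hxu⟩ := not_bddAbove_iff.1 hU (x 0)
  obtain ⟨v, hv, hxv⟩ := not_bddAbove_iff.1 hU (-x 0)
  refine ⟨max u v, fun t ht => ?_⟩
  have := mem_Icc_of_hasDerivWithinAt (a := -v) hx ⟨by linarith, hxu.le⟩
    (fun s hs h => hpos s hs (by rw [h, neg_neg]; exact hv)) (fun s hs h => hneg s hs (h ▸ hu)) ht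
  exact abs_le.2 ⟨by linarith [this.1, le_max_right u v], this.2.trans (le_max_left u v)⟩

theorem mul_le_sub_of_hasDerivWithinAt_neg {g V : ℝ → ℝ}
    (hV : ∀ t ∈ Ici 0, HasDerivWithinAt V (-g t) (Ici 0) t) {s τ m : ℝ} (hs : 0 ≤ s) (hτ : 0 ≤ τ)
    (hg : ∀ r ∈ Icc s (s + τ), m ≤ g r) : m * τ ≤ V s - V (s + τ) := by
  have := image_le_of_deriv_right_le_deriv_boundary (f' := fun r => -g r)
    (B := fun r => V s - m * (r - s)) (B' := fun _ => -m)
    (fun r hr => (hV r (hs.trans hr.1)).continuousWithinAt.mono fun q hq => hs.trans hq.1)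
    (fun r hr => (hV r (hs.trans hr.1)).mono (Ici_subset_Ici.2 (hs.trans hr.1)))
    (by simp) (by fun_prop)
    (fun r _ => by simpa using ((hasDerivAt_id r).sub_const s).const_mul m |>.const_sub (V s)
      |>.hasDerivWithinAt)
    (fun r hr => neg_le_neg (hg r (Ico_subset_Icc_self hr))) ⟨by linarith, le_rfl⟩
  simp only [add_sub_cancel_left] at this
  linarith

theorem AntitoneOn.exists_tendsto_atTop {V : ℝ → ℝ} {a : ℝ} (hV : AntitoneOn V (Ici a))
    (hVb : BddBelow (V '' Ici a)) : ∃ L, Tendsto V atTop (𝓝 L) := by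
  have hmono : Antitone fun t => V (max t a) := fun s t hst =>
    hV (le_max_right s a) (le_max_right t a) (max_le_max hst le_rfl)
  refine ⟨_, (tendsto_atTop_ciInf hmono ?_).congr' ?_⟩
  · obtain ⟨m, hm⟩ := hVb
    exact ⟨m, by rintro _ ⟨t, rfl⟩; exact hm ⟨_, le_max_right t a, rfl⟩⟩
  · filter_upwards [eventually_ge_atTop a] with t ht
    rw [max_eq_left ht]

theorem tendsto_zero_of_hasDerivWithinAt_neg {g V : ℝ → ℝ} (hg : ∀ t ≥ 0, 0 ≤ g t)
    (hgu : UniformContinuousOn g (Ici 0))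
    (hV : ∀ t ∈ Ici 0, HasDerivWithinAt V (-g t) (Ici 0) t) (hVb : BddBelow (V '' Ici 0)) :
    Tendsto g atTop (𝓝 0) := by
  have hanti : AntitoneOn V (Ici 0) := fun s hs t _ hst => by
    have := mul_le_sub_of_hasDerivWithinAt_neg (m := 0) hV hs (sub_nonneg.2 hst)
      fun r hr => hg r (hs.trans hr.1)
    rw [add_sub_cancel] at this
    linarith
  obtain ⟨L, hL⟩ := hanti.exists_tendsto_atTop hVb
  have hdiff (τ : ℝ) : Tendsto (fun t => V t - V (t + τ)) atTop (𝓝 0) := by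
    simpa using hL.sub (hL.comp (tendsto_atTop_add_const_right _ τ tendsto_id))
  rw [Metric.tendsto_atTop]
  intro ε hε
  obtain ⟨δ, hδ, hgδ⟩ := Metric.uniformContinuousOn_iff.1 hgu (ε / 2) (half_pos hε)
  obtain ⟨T, hT⟩ := Metric.tendsto_atTop.1 (hdiff (δ / 2)) (ε / 2 * (δ / 2)) (by positivity)
  refine ⟨max T 0, fun t ht => ?_⟩
  have ht0 : 0 ≤ t := le_of_max_le_right ht
  rw [Real.dist_eq, sub_zero, abs_of_nonneg (hg t ht0)]
  by_contra! hgt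
  -- uniform continuity keeps `g ≥ ε / 2` on `[t, t + δ / 2]`, so `V` drops by `ε δ / 4` there
  have hdrop := mul_le_sub_of_hasDerivWithinAt_neg (m := ε / 2) hV ht0 (half_pos hδ).le
    fun r hr => by
      have hrt : dist r t < δ := by
        rw [Real.dist_eq, abs_of_nonneg (by linarith [hr.1])]
        linarith [hr.2]
      have := hgδ r (ht0.trans hr.1) t ht0 hrt
      rw [Real.dist_eq] at this
      linarith [(abs_lt.1 this).1]
  have := hT t (le_of_max_le_left ht)
  rw [Real.dist_eq, sub_zero] at this
  linarith [(abs_lt.1 this).2]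

theorem IsCompact.tendsto_nhdsSet_zeros_of_tendsto_zero {X : Type*} [TopologicalSpace X]
    {K : Set X} (hK : IsCompact K) {Q : X → ℝ} (hQ : ContinuousOn Q K) {z : ℝ → X}
    (hzK : ∀ᶠ t in atTop, z t ∈ K)
    (hQz : Tendsto (fun t => Q (z t)) atTop (𝓝 0)) :
    Tendsto z atTop (𝓝ˢ {p ∈ K | Q p = 0}) := by
  refine (hasBasis_nhdsSet _).tendsto_right_iff.2 fun W ⟨hW, hZW⟩ => ?_
  obtain ⟨m, hm, hmQ⟩ := (hK.diff hW).exists_forall_le' (hQ.abs.mono sdiff_subset)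
    (a := 0) fun p hp => abs_pos.2 fun h => hp.2 (hZW ⟨hp.1, h⟩)
  have habs : Tendsto (fun t => |Q (z t)|) atTop (𝓝 0) := by simpa using hQz.abs
  filter_upwards [hzK, habs.eventually (gt_mem_nhds hm)] with t hK hlt
  by_contra hW
  exact (hmQ (z t) ⟨hK, hW⟩).not_gt hlt

theorem Set.Finite.exists_tendsto_of_tendsto_nhdsSet {X : Type*} [TopologicalSpace X] [T2Space X]
    {E : Set X} (hE : E.Finite) {z : ℝ → X} (hz : ContinuousOn z (Ici 0))
    (hzE : Tendsto z atTop (𝓝ˢ E)) : ∃ p ∈ E, Tendsto z atTop (𝓝 p) := by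
  obtain ⟨U, hU, hdisj⟩ := hE.t2_separation
  have hUopen : ∀ S : Set X, IsOpen (⋃ q ∈ S, U q) := fun S => isOpen_biUnion fun q _ => (hU q).2
  have hcover : ∀ p ∈ E, ∀ {N : Set X}, IsOpen N → p ∈ N →
      ∀ᶠ t in atTop, z t ∈ N ∪ ⋃ q ∈ E \ {p}, U q := by
    refine fun p hp N hN hpN => hzE ((hN.union (hUopen _)).mem_nhdsSet.2 fun q hq => ?_)
    by_cases hqp : q = p
    · exact Or.inl (hqp ▸ hpN)
    · exact Or.inr (mem_biUnion ⟨hq, hqp⟩ (hU q).1)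
  have hev : ∀ᶠ t in atTop, z t ∈ ⋃ q ∈ E, U q :=
    hzE ((hUopen E).mem_nhdsSet.2 fun p hp => mem_biUnion hp (hU p).1)
  obtain ⟨T, hT⟩ := (hev.and (eventually_ge_atTop 0)).exists_forall_of_atTop
  obtain ⟨p, hp, hzT⟩ := mem_iUnion₂.1 (hT T le_rfl).1
  have hsep : Disjoint (U p) (⋃ q ∈ E \ {p}, U q) :=
    disjoint_iUnion₂_right.2 fun q hq => hdisj hp hq.1 (Ne.symm hq.2)
  -- the tail of the curve is connected, so it cannot leave the neighbourhood `U p`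
  have htail : z '' Ici T ⊆ U p := by
    refine (isPreconnected_Ici.image z (hz.mono (Ici_subset_Ici.2 (hT T le_rfl).2)))
      |>.subset_left_of_subset_union (hU p).2 (hUopen _) hsep ?_
        ⟨z T, mem_image_of_mem z self_mem_Ici, hzT⟩
    rintro _ ⟨t, ht, rfl⟩
    obtain ⟨q, hq, hzq⟩ := mem_iUnion₂.1 (hT t ht).1
    by_cases hqp : q = p
    · exact Or.inl (hqp ▸ hzq)
    · exact Or.inr (mem_biUnion ⟨hq, hqp⟩ hzq)
  refine ⟨p, hp, tendsto_nhds.2 fun N hN hpN => ?_⟩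
  filter_upwards [hcover p hp hN hpN, eventually_ge_atTop T] with t hN' hT'
  exact hN'.resolve_right (disjoint_left.1 hsep (htail (mem_image_of_mem z hT')))

theorem exists_tendsto_of_hasDerivWithinAt_lyapunov {X : Type*} [UniformSpace X] [T2Space X]
    {z : ℝ → X} {K : Set X} {Q V : X → ℝ} (hK : IsCompact K) (hzK : ∀ t ≥ 0, z t ∈ K)
    (hz : UniformContinuousOn z (Ici 0)) (hQ : ContinuousOn Q K) (hQ0 : ∀ p ∈ K, 0 ≤ Q p)
    (hV : ContinuousOn V K)
    (hVz : ∀ t ∈ Ici 0, HasDerivWithinAt (fun t => V (z t)) (-Q (z t)) (Ici 0) t)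
    (hfin : {p ∈ K | Q p = 0}.Finite) : ∃ p ∈ K, Q p = 0 ∧ Tendsto z atTop (𝓝 p) := by
  have hQz : Tendsto (fun t => Q (z t)) atTop (𝓝 0) :=
    tendsto_zero_of_hasDerivWithinAt_neg (fun t ht => hQ0 _ (hzK t ht))
      ((hK.uniformContinuousOn_of_continuous hQ).comp hz fun t ht => hzK t ht) hVz
      ((hK.bddBelow_image hV).mono (by rintro _ ⟨t, ht, rfl⟩; exact ⟨z t, hzK t ht, rfl⟩))
  obtain ⟨p, hp, hzp⟩ := hfin.exists_tendsto_of_tendsto_nhdsSet hz.continuousOn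
    (hK.tendsto_nhdsSet_zeros_of_tendsto_zero hQ (eventually_atTop.2 ⟨0, hzK⟩) hQz)
  exact ⟨p, hp.1, hp.2, hzp⟩

theorem abs_sin_add_sub_sin_le (x y : ℝ) : |sin (x + y) - sin y| ≤ √(2 - 2 * cos x) := by
  refine abs_le_sqrt ?_
  have hcos : cos x = cos (x + y) * cos y + sin (x + y) * sin y := by
    rw [← cos_sub, add_sub_cancel_right]
  nlinarith [sin_sq_add_cos_sq (x + y), sin_sq_add_cos_sq y, sq_nonneg (cos (x + y) - cos y)]

theorem sin_add_sq_sub_sin_sq_sub_sin_sq (x y : ℝ) :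
    sin (x + y) ^ 2 - sin x ^ 2 - sin y ^ 2 = 2 * sin x * sin y * cos (x + y) := by
  rw [sin_add, cos_add]
  linear_combination sin x ^ 2 * sin_sq_add_cos_sq y + sin y ^ 2 * sin_sq_add_cos_sq x

theorem not_bddAbove_setOf_sin_eq_and_cos_eq (c : ℝ) :
    ¬BddAbove {u | sin u = sin c ∧ cos u = cos c} := by
  refine not_bddAbove_iff.2 fun r => ?_
  obtain ⟨n, hn⟩ := exists_nat_gt ((r - c) / (2 * π))
  rw [div_lt_iff₀ (by positivity)] at hn
  exact ⟨c + n * (2 * π), ⟨sin_add_nat_mul_two_pi c n, cos_add_nat_mul_two_pi c n⟩, by linarith⟩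

theorem finite_setOf_sin_eq_inter_Icc (c lo hi : ℝ) : ({ξ | sin ξ = c} ∩ Icc lo hi).Finite := by
  rcases ({ξ | sin ξ = c} ∩ Icc lo hi).eq_empty_or_nonempty with h | ⟨ξ₀, hξ₀, -⟩
  · simp [h]
  have hlattice : ∀ ζ : ℝ, ((fun k : ℤ => 2 * k * π + ζ) ⁻¹' Icc lo hi).Finite := by
    intro ζ
    refine (tendsto_cofinite_cocompact_iff.1 Int.tendsto_coe_cofinite
      (Icc ((lo - ζ) / (2 * π)) ((hi - ζ) / (2 * π))) isCompact_Icc).subset fun k hk => ?_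
    simp only [mem_preimage, mem_Icc] at hk ⊢
    constructor
    · rw [div_le_iff₀ (by positivity)]; linarith
    · rw [le_div_iff₀ (by positivity)]; linarith
  refine (((hlattice ξ₀).image fun k : ℤ => 2 * k * π + ξ₀).union
    ((hlattice (π - ξ₀)).image fun k : ℤ => 2 * k * π + (π - ξ₀))).subset ?_
  rintro ξ ⟨hξ, hξI⟩
  obtain ⟨k, hk | hk⟩ := sin_eq_sin_iff.1 (hξ₀.trans hξ.symm)
  · exact Or.inl ⟨k, by simpa [← hk] using hξI, hk.symm⟩
  · have hk' : ξ = 2 * k * π + (π - ξ₀) := by rw [hk]; ring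
    exact Or.inr ⟨k, by simpa [← hk'] using hξI, hk'.symm⟩

theorem Set.Finite.sin_preimage_inter_Icc {S : Set ℝ} (hS : S.Finite) (lo hi : ℝ) :
    (sin ⁻¹' S ∩ Icc lo hi).Finite := by
  rw [← biUnion_preimage_singleton, iUnion₂_inter]
  exact hS.biUnion fun c _ => finite_setOf_sin_eq_inter_Icc c lo hi

-- Squaring `sin_add_sq_sub_sin_sq_sub_sin_sq` eliminates the cosines: `X` stands for `sin x`,
-- `X - m` for `sin y` and `n - X` for `sin (x + y)`.
open Polynomial in
noncomputable def sinResolvent (m n : ℝ) : ℝ[X] :=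
  ((C n - X) ^ 2 - X ^ 2 - (X - C m) ^ 2) ^ 2 - 4 * X ^ 2 * (X - C m) ^ 2 * (1 - (C n - X) ^ 2)

theorem sinResolvent_natDegree (m n : ℝ) : (sinResolvent m n).natDegree = 6 := by
  unfold sinResolvent
  compute_degree!

theorem sinResolvent_isRoot {m n x y : ℝ} (hm : sin y = sin x - m) (hn : sin (x + y) = n - sin x) :
    (sinResolvent m n).IsRoot (sin x) := by
  simp only [sinResolvent, Polynomial.IsRoot, Polynomial.eval_sub, Polynomial.eval_mul,
    Polynomial.eval_pow, Polynomial.eval_C, Polynomial.eval_X, Polynomial.eval_ofNat,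
    Polynomial.eval_one]
  rw [← hm, ← hn]
  linear_combination (sin (x + y) ^ 2 - sin x ^ 2 - sin y ^ 2 + 2 * sin x * sin y * cos (x + y)) *
    sin_add_sq_sub_sin_sq_sub_sin_sq x y + 4 * sin x ^ 2 * sin y ^ 2 * sin_sq_add_cos_sq (x + y)

noncomputable def barrierMargin (c : ℝ) : ℝ := 2 * sin c - √(2 - 2 * cos c)

theorem barrierMargin_two_mul_arccos {γ : ℝ} (h₀ : -1 ≤ γ) (h₁ : γ ≤ 1) :
    barrierMargin (2 * arccos γ) = 2 * √(1 - γ ^ 2) * (2 * γ - 1) := by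
  have hcos : cos (arccos γ) = γ := cos_arccos h₀ h₁
  have hσ2 : √(1 - γ ^ 2) ^ 2 = 1 - γ ^ 2 := sq_sqrt (by nlinarith)
  have hsq : 2 - 2 * cos (2 * arccos γ) = (2 * √(1 - γ ^ 2)) ^ 2 := by
    rw [cos_two_mul, hcos]; linear_combination -4 * hσ2
  rw [barrierMargin, hsq, sqrt_sq (by positivity), sin_two_mul, sin_arccos, hcos]
  ring

theorem exists_three_mul_lt_barrierMargin {κ D : ℝ}
    (hκ : √(138 + 22 * √33) / 4 * D < κ) : ∃ c, 3 * D < κ * barrierMargin c := by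
  set w := √33
  have hw2 : w ^ 2 = 33 := sq_sqrt (by norm_num)
  have hw5 : 5 < w := by nlinarith [sqrt_nonneg 33]
  have hw6 : w < 6 := by nlinarith [sqrt_nonneg 33]
  -- `γ = cos (c / 2) = (1 + √33) / 8` maximises the margin `2 √(1 - γ²) (2γ - 1)`
  set σ := √(1 - ((1 + w) / 8) ^ 2)
  have hσ2 : σ ^ 2 = 1 - ((1 + w) / 8) ^ 2 := sq_sqrt (by nlinarith)
  have hσ : 0 < σ := sqrt_pos.2 (by nlinarith)
  have hpos : 0 < 2 * σ * (2 * ((1 + w) / 8) - 1) := mul_pos (by positivity) (by linarith)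
  have hprod : 2 * σ * (2 * ((1 + w) / 8) - 1) * √(138 + 22 * w) = 12 := by
    have hsq : (2 * σ * (2 * ((1 + w) / 8) - 1) * √(138 + 22 * w)) ^ 2 = 12 ^ 2 := by
      rw [mul_pow, sq_sqrt (by linarith)]
      linear_combination ((w - 3) ^ 2 * (138 + 22 * w) / 4) * hσ2 +
        ((-11 * w ^ 3 - 25 * w ^ 2 + 639 * w - 627) / 128) * hw2
    exact (pow_left_inj₀ (by positivity) (by norm_num) two_ne_zero).1 hsq
  refine ⟨2 * arccos ((1 + w) / 8), ?_⟩
  calc 3 * D = 2 * σ * (2 * ((1 + w) / 8) - 1) * (√(138 + 22 * w) / 4 * D) := by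
        linear_combination (-D / 4) * hprod
    _ < 2 * σ * (2 * ((1 + w) / 8) - 1) * κ := mul_lt_mul_of_pos_left hκ hpos
    _ = κ * barrierMargin (2 * arccos ((1 + w) / 8)) := by
        rw [barrierMargin_two_mul_arccos (by linarith) (by linarith)]
        ring

-- With `x = θ₀ - θ₁` and `y = θ₁ - θ₂`, the three-oscillator system reads
-- `x' = phaseDrift κ (ν₀ - ν₁) x y` and `y' = phaseDrift κ (ν₁ - ν₂) y x`.
noncomputable def phaseDrift (κ a u v : ℝ) : ℝ := a - κ / 3 * (2 * sin u + sin (u + v) - sin v)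

theorem phaseDrift_neg {κ a D c u : ℝ} (hκ : 0 < κ) (ha : a ≤ D)
    (hc : 3 * D < κ * barrierMargin c) (hsin : sin u = sin c) (hcos : cos u = cos c) (v : ℝ) :
    phaseDrift κ a u v < 0 := by
  have hosc := (abs_le.1 (abs_sin_add_sub_sin_le u v)).1
  rw [hcos] at hosc
  have : κ * barrierMargin c ≤ κ * (2 * sin u + sin (u + v) - sin v) := by
    rw [barrierMargin, hsin]
    exact mul_le_mul_of_nonneg_left (by linarith) hκ.le
  rw [phaseDrift]
  linarith

theorem phaseDrift_pos {κ a D c u : ℝ} (hκ : 0 < κ) (ha : -D ≤ a)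
    (hc : 3 * D < κ * barrierMargin c) (hsin : sin u = -sin c) (hcos : cos u = cos c) (v : ℝ) :
    0 < phaseDrift κ a u v := by
  have := phaseDrift_neg (a := -a) (u := -u) hκ (by linarith) hc (by rw [sin_neg, hsin, neg_neg])
    (by rw [cos_neg, hcos]) (-v)
  rw [phaseDrift, ← neg_add, sin_neg, sin_neg, sin_neg] at this
  rw [phaseDrift]
  linarith

theorem exists_forall_abs_le_of_phaseDrift {κ a D c : ℝ} (hκ : 0 < κ) (ha : |a| ≤ D)
    (hc : 3 * D < κ * barrierMargin c) {x y : ℝ → ℝ}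
    (hx : ∀ t ∈ Ici 0, HasDerivWithinAt x (phaseDrift κ a (x t) (y t)) (Ici 0) t) :
    ∃ R, ∀ t ≥ 0, |x t| ≤ R :=
  exists_forall_abs_le_of_hasDerivWithinAt hx (not_bddAbove_setOf_sin_eq_and_cos_eq c)
    (fun t _ h => phaseDrift_pos hκ (abs_le.1 ha).1 hc (by rw [← h.1, sin_neg, neg_neg])
      (by rw [← h.2, cos_neg]) _)
    (fun t _ h => phaseDrift_neg hκ (abs_le.1 ha).2 hc h.1 h.2 _)

theorem abs_phaseDrift_le (κ a u v : ℝ) : |phaseDrift κ a u v| ≤ |a| + 2 * |κ| := by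
  have hsum : |2 * sin u + sin (u + v) - sin v| ≤ 4 := by
    refine abs_le.2 ⟨?_, ?_⟩ <;>
      linarith [neg_one_le_sin u, sin_le_one u, neg_one_le_sin (u + v), sin_le_one (u + v),
        neg_one_le_sin v, sin_le_one v]
  calc |phaseDrift κ a u v| ≤ |a| + |κ / 3 * (2 * sin u + sin (u + v) - sin v)| := abs_sub _ _
    _ = |a| + |κ| / 3 * |2 * sin u + sin (u + v) - sin v| := by
        rw [abs_mul, abs_div, abs_of_pos (by norm_num : (0 : ℝ) < 3)]
    _ ≤ |a| + 2 * |κ| := by nlinarith [abs_nonneg κ]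

-- Three times `∑ᵢ (ν̄ - νᵢ) θᵢ - (κ / 6) ∑ᵢⱼ cos (θⱼ - θᵢ)` in the coordinates `x`, `y`;
-- its gradient is `-(2x' + y', x' + 2y')`.
noncomputable def phasePotential (κ a b : ℝ) (p : ℝ × ℝ) : ℝ :=
  -(2 * a + b) * p.1 - (a + 2 * b) * p.2 - κ * (cos p.1 + cos p.2 + cos (p.1 + p.2))

noncomputable def phaseDissipation (κ a b : ℝ) (p : ℝ × ℝ) : ℝ :=
  2 * (phaseDrift κ a p.1 p.2 ^ 2 + phaseDrift κ a p.1 p.2 * phaseDrift κ b p.2 p.1 +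
    phaseDrift κ b p.2 p.1 ^ 2)

theorem hasDerivWithinAt_phasePotential {κ a b : ℝ} {x y : ℝ → ℝ} {s : Set ℝ} {t : ℝ}
    (hx : HasDerivWithinAt x (phaseDrift κ a (x t) (y t)) s t)
    (hy : HasDerivWithinAt y (phaseDrift κ b (y t) (x t)) s t) :
    HasDerivWithinAt (fun t => phasePotential κ a b (x t, y t))
      (-phaseDissipation κ a b (x t, y t)) s t := by
  unfold phasePotential
  dsimp only
  refine (((hx.const_mul (-(2 * a + b))).fun_sub (hy.const_mul (a + 2 * b))).fun_sub
    (((hx.cos.fun_add hy.cos).fun_add (hx.fun_add hy).cos).const_mul κ)).congr_deriv ?_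
  simp only [phaseDissipation, phaseDrift, add_comm (y t) (x t)]
  ring

theorem phaseDissipation_nonneg (κ a b : ℝ) (p : ℝ × ℝ) : 0 ≤ phaseDissipation κ a b p := by
  rw [phaseDissipation]
  nlinarith [sq_nonneg (phaseDrift κ a p.1 p.2 + phaseDrift κ b p.2 p.1),
    sq_nonneg (phaseDrift κ a p.1 p.2), sq_nonneg (phaseDrift κ b p.2 p.1)]

theorem phaseDrift_eq_zero_of_phaseDissipation_eq_zero {κ a b : ℝ} {p : ℝ × ℝ}
    (h : phaseDissipation κ a b p = 0) :
    phaseDrift κ a p.1 p.2 = 0 ∧ phaseDrift κ b p.2 p.1 = 0 := by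
  rw [phaseDissipation] at h
  constructor <;> nlinarith [sq_nonneg (phaseDrift κ a p.1 p.2 + phaseDrift κ b p.2 p.1),
    sq_nonneg (phaseDrift κ a p.1 p.2), sq_nonneg (phaseDrift κ b p.2 p.1)]

theorem sin_eq_of_phaseDrift_eq_zero {κ a b x y : ℝ} (hκ : κ ≠ 0) (hx : phaseDrift κ a x y = 0)
    (hy : phaseDrift κ b y x = 0) :
    sin y = sin x - (a - b) / κ ∧ sin (x + y) = (2 * a + b) / κ - sin x := by
  rw [phaseDrift, add_comm y x] at hy
  rw [phaseDrift] at hx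
  constructor <;> field_simp
  · linear_combination hx - hy
  · linear_combination -(2 * hx + hy)

theorem finite_setOf_phaseDrift_eq_zero {κ : ℝ} (hκ : κ ≠ 0) (a b R : ℝ) :
    {p ∈ closedBall (0 : ℝ × ℝ) R |
      phaseDrift κ a p.1 p.2 = 0 ∧ phaseDrift κ b p.2 p.1 = 0}.Finite := by
  set m := (a - b) / κ
  set n := (2 * a + b) / κ
  have hroots : {s | (sinResolvent m n).IsRoot s}.Finite :=
    Polynomial.finite_setOfPred_isRoot fun h => by simpa [h] using sinResolvent_natDegree m n
  refine ((hroots.sin_preimage_inter_Icc (-R) R).prod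
    ((hroots.image (· - m)).sin_preimage_inter_Icc (-R) R)).subset ?_
  rintro ⟨x, y⟩ ⟨hp, hx, hy⟩
  obtain ⟨hm, hn⟩ := sin_eq_of_phaseDrift_eq_zero hκ hx hy
  have hR := mem_closedBall_zero_iff.1 hp
  exact ⟨⟨sinResolvent_isRoot hm hn, abs_le.1 ((norm_fst_le _).trans hR)⟩,
    ⟨⟨sin x, sinResolvent_isRoot hm hn, hm.symm⟩, abs_le.1 ((norm_snd_le _).trans hR)⟩⟩

theorem exists_tendsto_of_phaseDrift {κ a b D c : ℝ} (hκ : 0 < κ) (ha : |a| ≤ D) (hb : |b| ≤ D)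
    (hc : 3 * D < κ * barrierMargin c) {x y : ℝ → ℝ}
    (hx : ∀ t ∈ Ici 0, HasDerivWithinAt x (phaseDrift κ a (x t) (y t)) (Ici 0) t)
    (hy : ∀ t ∈ Ici 0, HasDerivWithinAt y (phaseDrift κ b (y t) (x t)) (Ici 0) t) :
    ∃ p : ℝ × ℝ, Tendsto (fun t => (x t, y t)) atTop (𝓝 p) := by
  obtain ⟨Rx, hRx⟩ := exists_forall_abs_le_of_phaseDrift hκ ha hc hx
  obtain ⟨Ry, hRy⟩ := exists_forall_abs_le_of_phaseDrift hκ hb hc hy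
  have hzK : ∀ t ≥ 0, (x t, y t) ∈ closedBall (0 : ℝ × ℝ) (max Rx Ry) := fun t ht => by
    rw [mem_closedBall_zero_iff, Prod.norm_def, norm_eq_abs, norm_eq_abs]
    exact max_le_max (hRx t ht) (hRy t ht)
  have hlip : LipschitzOnWith (|a| + |b| + 2 * |κ|).toNNReal (fun t => (x t, y t)) (Ici 0) :=
    (convex_Ici 0).lipschitzOnWith_of_nnnorm_hasDerivWithin_le
      (fun t ht => (hx t ht).prodMk (hy t ht)) fun t _ => by
        rw [← NNReal.coe_le_coe, coe_nnnorm, Prod.norm_def, norm_eq_abs, norm_eq_abs,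
          Real.coe_toNNReal _ (by positivity)]
        exact max_le (by linarith [abs_phaseDrift_le κ a (x t) (y t), abs_nonneg b])
          (by linarith [abs_phaseDrift_le κ b (y t) (x t), abs_nonneg a])
  have hcont : Continuous (phaseDissipation κ a b) := by
    unfold phaseDissipation phaseDrift
    fun_prop
  obtain ⟨p, -, -, hp⟩ := exists_tendsto_of_hasDerivWithinAt_lyapunov (isCompact_closedBall 0 _)
    hzK hlip.uniformContinuousOn hcont.continuousOn (fun p _ => phaseDissipation_nonneg κ a b p)
    (by unfold phasePotential; fun_prop)
    (fun t ht => hasDerivWithinAt_phasePotential (hx t ht) (hy t ht))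
    ((finite_setOf_phaseDrift_eq_zero hκ.ne' a b _).subset fun p hp =>
      ⟨hp.1, phaseDrift_eq_zero_of_phaseDissipation_eq_zero hp.2⟩)
  exact ⟨p, hp⟩

theorem abs_sub_le_freqDiam {N : ℕ} (ν : Fin N → ℝ) (i j : Fin N) : |ν i - ν j| ≤ freqDiam ν :=
  le_csSup ((finite_range fun p : Fin N × Fin N => |ν p.1 - ν p.2|).subset
    (by rintro _ ⟨i, j, rfl⟩; exact ⟨(i, j), rfl⟩)).bddAbove ⟨i, j, rfl⟩

theorem freqDiam_nonneg {N : ℕ} (ν : Fin N → ℝ) : 0 ≤ freqDiam ν :=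
  Real.sSup_nonneg (by rintro _ ⟨i, j, rfl⟩; exact abs_nonneg _)

theorem IsKuramotoOn.hasDerivWithinAt_sub {κ : ℝ} {ν : Fin 3 → ℝ} {θ : ℝ → Fin 3 → ℝ}
    (h : IsKuramotoOn κ ν θ) {t : ℝ} (ht : t ∈ Ici 0) :
    HasDerivWithinAt (fun s => θ s 0 - θ s 1)
        (phaseDrift κ (ν 0 - ν 1) (θ t 0 - θ t 1) (θ t 1 - θ t 2)) (Ici 0) t ∧
      HasDerivWithinAt (fun s => θ s 1 - θ s 2)
        (phaseDrift κ (ν 1 - ν 2) (θ t 1 - θ t 2) (θ t 0 - θ t 1)) (Ici 0) t := by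
  refine ⟨((h 0 t ht).sub (h 1 t ht)).congr_deriv ?_,
    ((h 1 t ht).sub (h 2 t ht)).congr_deriv ?_⟩ <;>
  · simp only [phaseDrift, Fin.sum_univ_three, sub_add_sub_cancel, sub_add_sub_cancel', sin_sub,
      Nat.cast_ofNat]
    ring

theorem three_oscillators_complete_phase_locking_general (κ : ℝ) (ν : Fin 3 → ℝ)
    (hκ : Real.sqrt (138 + 22 * Real.sqrt 33) / 4 * freqDiam ν < κ)
    (Φ : (Fin 3 → ℝ) → ℝ → Fin 3 → ℝ)
    (hΦ : ∀ Θ0 : Fin 3 → ℝ, IsKuramotoOn κ ν (Φ Θ0)) :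
    ∀ Θ0 : Fin 3 → ℝ, ∀ i j : Fin 3, ∃ L : ℝ,
      Filter.Tendsto (fun t => Φ Θ0 t i - Φ Θ0 t j) Filter.atTop (nhds L) := by
  intro Θ0 i j
  have hD := freqDiam_nonneg ν
  have hκ0 : 0 < κ := (mul_nonneg (by positivity) hD).trans_lt hκ
  obtain ⟨c, hc⟩ := exists_three_mul_lt_barrierMargin hκ
  obtain ⟨p, hp⟩ := exists_tendsto_of_phaseDrift hκ0 (abs_sub_le_freqDiam ν 0 1)
    (abs_sub_le_freqDiam ν 1 2) hc (fun t ht => ((hΦ Θ0).hasDerivWithinAt_sub ht).1)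
    (fun t ht => ((hΦ Θ0).hasDerivWithinAt_sub ht).2)
  have hrel : ∀ k, ∃ L, Tendsto (fun t => Φ Θ0 t k - Φ Θ0 t 2) atTop (𝓝 L) := by
    intro k
    fin_cases k
    · exact ⟨p.1 + p.2, (((continuous_fst.add continuous_snd).tendsto p).comp hp).congr
        fun t => sub_add_sub_cancel _ _ _⟩
    · exact ⟨p.2, (continuous_snd.tendsto p).comp hp⟩
    · exact ⟨0, by simp⟩
  obtain ⟨Li, hi⟩ := hrel i
  obtain ⟨Lj, hj⟩ := hrel j
  exact ⟨Li - Lj, (hi.sub hj).congr fun t => sub_sub_sub_cancel_right _ _ _⟩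

/-- Proposition 4.1: for `N = 3` and `κ > (√(138+22√33)/4)·D(Ω)`, every Kuramoto
flow exhibits complete phase-locking. -/
theorem three_oscillators_complete_phase_locking (κ : ℝ) (ν : Fin 3 → ℝ)
    (hκ : Real.sqrt (138 + 22 * Real.sqrt 33) / 4 * freqDiam ν < κ)
    (Φ : (Fin 3 → ℝ) → ℝ → Fin 3 → ℝ)
    (hΦ0 : ∀ Θ0 : Fin 3 → ℝ, Φ Θ0 0 = Θ0)
    (hΦ : ∀ Θ0 : Fin 3 → ℝ, IsKuramotoOn κ ν (Φ Θ0)) :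
    ∀ Θ0 : Fin 3 → ℝ, ∀ i j : Fin 3, ∃ L : ℝ,
      Filter.Tendsto (fun t => Φ Θ0 t i - Φ Θ0 t j) Filter.atTop (nhds L) :=
  three_oscillators_complete_phase_locking_general κ ν hκ Φ hΦ
end
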